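/- Let R = K⟨X⟩ be a free algebra over a field K graded by word length, I a two-sided ideal, and A = R/I. If ⟨LM(I)⟩ = ⟨LM(𝓖)⟩ for some 𝓖 ⊆ I with respect to a graded monomial ordering, then for every nonzero f ∈ I there exist λ_j ∈ K, words u_j, v_j, and g_j ∈ 𝓖 with f = Σ_j λ_j u_j g_j v_j, u_j LM(g_j) v_j ≠ 0, LM(f) ≽ LM(u_j g_j v_j), and d(u_j) + d(g_j) + d(v_j) ≤ d(f) for all j. -/

import Mathlib

open Polynomial
open scoped Classical

variable {X K : Type*} [Field K] [LinearOrder (FreeMonoid X)]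

/-- The leading monomial (as a word) of an element of the free algebra
`K⟨X⟩ = MonoidAlgebra K (FreeMonoid X)`, with junk value the empty word for `0`. -/
noncomputable def lm (f : MonoidAlgebra K (FreeMonoid X)) : FreeMonoid X :=
  WithBot.unbotD 1 f.coeff.support.max

/-- The set of leading monomials (viewed as elements of the free algebra) of the
nonzero elements of `S`. -/
noncomputable def LMset (S : Set (MonoidAlgebra K (FreeMonoid X))) :
    Set (MonoidAlgebra K (FreeMonoid X)) :=
  (fun f => MonoidAlgebra.single (lm f) (1 : K)) '' (S \ {0})

/-- The degree (top word length) of an element of the free algebra. -/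
noncomputable def dW (f : MonoidAlgebra K (FreeMonoid X)) : ℕ :=
  f.coeff.support.sup (fun w => w.length)

/-- The leading homogeneous part of an element of the free algebra. -/
noncomputable def LHm (f : MonoidAlgebra K (FreeMonoid X)) : MonoidAlgebra K (FreeMonoid X) :=
  MonoidAlgebra.ofCoeff (Finsupp.filter (fun w => w.length = dW f) f.coeff)

/-- The set of leading homogeneous parts of the nonzero elements of `S`. -/
noncomputable def LHset (S : Set (MonoidAlgebra K (FreeMonoid X))) :
    Set (MonoidAlgebra K (FreeMonoid X)) :=
  LHm '' (S \ {0})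

/-- A graded (length-compatible) ordering: words of smaller length are smaller. -/
def GradedOrder (X : Type*) [LinearOrder (FreeMonoid X)] : Prop :=
  ∀ u v : FreeMonoid X, u.length < v.length → u < v

/-- A monomial ordering: compatible with multiplication on both sides. -/
def MonomialOrder' (X : Type*) [LinearOrder (FreeMonoid X)] : Prop :=
  ∀ u v w : FreeMonoid X, u < v → w * u < w * v ∧ u * w < v * w

/-! Division by `G`. The leading word of `f ∈ I` lies in `⟨LM(I)⟩ = ⟨LM(G)⟩`, whose elements are
supported on words `u LM(g) v` with `g ∈ G`; so `LM(f) = u LM(g) v`, and subtracting the matching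
multiple `λ u g v` cancels the leading term of `f` while staying in `I`. Well-founded induction on
`LM(f)` yields the presentation. Every term has leading word `≼ LM(f)` and, as the ordering refines
length, degree `≤ d(f)`. -/

open MonoidAlgebra

theorem MonomialOrder'.strictMono_mul_mul (hmo : MonomialOrder' X) (u v : FreeMonoid X) :
    StrictMono (fun w => u * w * v) :=
  fun _ _ h => (hmo _ _ v (hmo _ _ u h).1).2

theorem GradedOrder.length_le_length (hgr : GradedOrder X) {u v : FreeMonoid X} (h : u ≤ v) :
    u.length ≤ v.length := by
  by_contra! hlt
  exact (hgr _ _ hlt).not_ge h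

section LeadingMonomial

variable {f : MonoidAlgebra K (FreeMonoid X)} {w : FreeMonoid X}

theorem lm_mem_support (hf : f ≠ 0) : lm f ∈ f.coeff.support := by
  obtain ⟨m, hm⟩ :=
    Finset.max_of_nonempty (Finsupp.support_nonempty_iff.2 (coeff_eq_zero.not.2 hf))
  rw [lm, hm]
  exact Finset.mem_of_max hm

theorem le_lm (hw : w ∈ f.coeff.support) : w ≤ lm f := by
  obtain ⟨m, hm⟩ := Finset.max_of_mem hw
  rw [lm, hm]
  exact WithBot.coe_le_coe.1 (hm ▸ Finset.le_max hw)

theorem lm_eq_of_forall_le (hw : w ∈ f.coeff.support) (h : ∀ w' ∈ f.coeff.support, w' ≤ w) :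
    lm f = w :=
  le_antisymm (h _ (lm_mem_support fun hf => by simp [hf] at hw)) (le_lm hw)

theorem lt_lm_of_mem_support_sub {h : MonoidAlgebra K (FreeMonoid X)}
    (hle : ∀ w' ∈ h.coeff.support, w' ≤ lm f) (hc : h.coeff (lm f) = f.coeff (lm f))
    (hw : w ∈ (f - h).coeff.support) : w < lm f := by
  refine lt_of_le_of_ne ?_ fun hwf => ?_
  · rw [MonoidAlgebra.coeff_sub] at hw
    rcases Finset.mem_union.1 (Finsupp.support_sub hw) with hwf | hwh
    exacts [le_lm hwf, hle w hwh]
  · rw [hwf, Finsupp.mem_support_iff, MonoidAlgebra.coeff_sub, Finsupp.sub_apply, hc,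
      sub_self] at hw
    exact hw rfl

theorem GradedOrder.dW_eq_length_lm (hgr : GradedOrder X) (hf : f ≠ 0) :
    dW f = (lm f).length :=
  le_antisymm (Finset.sup_le fun _ hw => hgr.length_le_length (le_lm hw))
    (Finset.le_sup (lm_mem_support hf))

end LeadingMonomial

theorem MonoidAlgebra.coeff_single_mul_mul_single {R M : Type*} [Semiring R] [CancelMonoid M]
    (g : MonoidAlgebra R M) (u w v : M) (c r : R) :
    (single u c * g * single v r).coeff (u * w * v) = c * g.coeff w * r := by
  rw [coeff_mul_single_mul, coeff_single_mul_mul]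

section SingleMulMulSingle

variable {g : MonoidAlgebra K (FreeMonoid X)} {u v w : FreeMonoid X} {c r : K}

theorem le_of_mem_support_single_mul_mul_single (hmo : MonomialOrder' X)
    (hw : w ∈ (single u c * g * single v r).coeff.support) : w ≤ u * lm g * v := by
  classical
  obtain ⟨w', hw', rfl⟩ := Finset.mem_image.1 (support_coeff_mul_single_subset _ _ _ hw)
  obtain ⟨w'', hw'', rfl⟩ := Finset.mem_image.1 (support_coeff_single_mul_subset _ _ _ hw')
  exact (hmo.strictMono_mul_mul u v).monotone (le_lm hw'')

theorem lm_single_mul_mul_single (hmo : MonomialOrder' X) (hc : c ≠ 0) (hg : g ≠ 0) :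
    lm (single u c * g * single v (1 : K)) = u * lm g * v := by
  refine lm_eq_of_forall_le ?_ fun _ => le_of_mem_support_single_mul_mul_single hmo
  rw [Finsupp.mem_support_iff, coeff_single_mul_mul_single, mul_one]
  exact mul_ne_zero hc (Finsupp.mem_support_iff.1 (lm_mem_support hg))

end SingleMulMulSingle

noncomputable def MonoidAlgebra.supportedTwoSidedIdeal {R M : Type*} [Ring R] [Monoid M]
    (W : Set M) (hW : ∀ a w b, w ∈ W → a * w * b ∈ W) :
    TwoSidedIdeal (MonoidAlgebra R M) := by
  classical
  refine TwoSidedIdeal.mk' {x | ∀ w ∈ x.coeff.support, w ∈ W} (by simp) ?_ ?_ ?_ ?_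
  · intro x y hx hy w hw
    rcases Finset.mem_union.1 (Finsupp.support_add hw) with hw | hw
    exacts [hx w hw, hy w hw]
  · intro x hx w hw
    rw [MonoidAlgebra.coeff_neg, Finsupp.support_neg] at hw
    exact hx w hw
  · intro x y hy w hw
    obtain ⟨p, -, q, hq, rfl⟩ := Finset.mem_mul.1 (support_coeff_mul_subset x y hw)
    simpa using hW p q 1 (hy q hq)
  · intro x y hx w hw
    obtain ⟨p, hp, q, -, rfl⟩ := Finset.mem_mul.1 (support_coeff_mul_subset x y hw)
    simpa using hW 1 p q (hx p hp)

theorem MonoidAlgebra.mem_supportedTwoSidedIdeal {R M : Type*} [Ring R] [Monoid M] {W : Set M}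
    {hW : ∀ a w b, w ∈ W → a * w * b ∈ W} {x : MonoidAlgebra R M} :
    x ∈ supportedTwoSidedIdeal W hW ↔ ∀ w ∈ x.coeff.support, w ∈ W :=
  TwoSidedIdeal.mem_mk' ..

theorem exists_eq_mul_lm_mul_of_mem_span_LMset {G : Set (MonoidAlgebra K (FreeMonoid X))}
    {f : MonoidAlgebra K (FreeMonoid X)} (hf : f ∈ TwoSidedIdeal.span (LMset G))
    {w : FreeMonoid X} (hw : w ∈ f.coeff.support) :
    ∃ g ∈ G, g ≠ 0 ∧ ∃ u v : FreeMonoid X, w = u * lm g * v := by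
  let W : Set (FreeMonoid X) := {w | ∃ g ∈ G, g ≠ 0 ∧ ∃ u v : FreeMonoid X, w = u * lm g * v}
  have hW : ∀ a w b, w ∈ W → a * w * b ∈ W := by
    rintro a _ b ⟨g, hg, hg0, u, v, rfl⟩
    exact ⟨g, hg, hg0, a * u, v * b, by simp only [mul_assoc]⟩
  have hspan : TwoSidedIdeal.span (LMset G) ≤ supportedTwoSidedIdeal W hW := by
    rw [TwoSidedIdeal.span_le]
    rintro _ ⟨g, ⟨hg, hg0⟩, rfl⟩
    rw [SetLike.mem_coe, mem_supportedTwoSidedIdeal, coeff_single]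
    intro w hw
    obtain rfl := Finset.mem_singleton.1 (Finsupp.support_single_subset hw)
    exact ⟨g, hg, hg0, 1, 1, by simp⟩
  exact mem_supportedTwoSidedIdeal.1 (hspan hf) w hw

theorem exists_leading_reduction (hmo : MonomialOrder' X)
    {S G : Set (MonoidAlgebra K (FreeMonoid X))}
    (hSG : TwoSidedIdeal.span (LMset S) ≤ TwoSidedIdeal.span (LMset G))
    {f : MonoidAlgebra K (FreeMonoid X)} (hf : f ∈ S) (hf0 : f ≠ 0) :
    ∃ g ∈ G, g ≠ 0 ∧ ∃ (u v : FreeMonoid X) (c : K), lm f = u * lm g * v ∧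
      ∀ w ∈ (f - single u c * g * single v 1).coeff.support, w < lm f := by
  have hlm : single (lm f) (1 : K) ∈ TwoSidedIdeal.span (LMset G) :=
    hSG (TwoSidedIdeal.subset_span ⟨f, ⟨hf, hf0⟩, rfl⟩)
  obtain ⟨g, hg, hg0, u, v, huv⟩ := exists_eq_mul_lm_mul_of_mem_span_LMset hlm (w := lm f)
    (by simp [coeff_single])
  have hlc : g.coeff (lm g) ≠ 0 := Finsupp.mem_support_iff.1 (lm_mem_support hg0)
  refine ⟨g, hg, hg0, u, v, f.coeff (lm f) / g.coeff (lm g), huv, fun w =>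
    lt_lm_of_mem_support_sub (fun _ hw => huv ▸ le_of_mem_support_single_mul_mul_single hmo hw) ?_⟩
  rw [huv, coeff_single_mul_mul_single, mul_one, div_mul_cancel₀ _ hlc]

def HasGroebnerRep (G : Set (MonoidAlgebra K (FreeMonoid X))) (m : FreeMonoid X) (d : ℕ)
    (f : MonoidAlgebra K (FreeMonoid X)) : Prop :=
  ∃ (n : ℕ) (lam : Fin n → K) (u v : Fin n → FreeMonoid X)
    (g : Fin n → MonoidAlgebra K (FreeMonoid X)),
    (∀ j, g j ∈ G) ∧ (∀ j, g j ≠ 0) ∧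
    f = ∑ j, single (u j) (lam j) * g j * single (v j) 1 ∧
    (∀ j, single (u j) (1 : K) * single (lm (g j)) (1 : K) * single (v j) (1 : K) ≠ 0) ∧
    (∀ j, lm (single (u j) (1 : K) * g j * single (v j) (1 : K)) ≤ m) ∧
    (∀ j, (u j).length + dW (g j) + (v j).length ≤ d)

section HasGroebnerRep

variable {G : Set (MonoidAlgebra K (FreeMonoid X))} {m : FreeMonoid X} {d : ℕ}
  {f : MonoidAlgebra K (FreeMonoid X)}

theorem hasGroebnerRep_zero : HasGroebnerRep G m d 0 :=
  ⟨0, Fin.elim0, Fin.elim0, Fin.elim0, Fin.elim0, nofun, nofun, by simp, nofun, nofun, nofun⟩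

theorem HasGroebnerRep.mono {m' : FreeMonoid X} {d' : ℕ} (hf : HasGroebnerRep G m d f)
    (hm : m ≤ m') (hd : d ≤ d') : HasGroebnerRep G m' d' f := by
  obtain ⟨n, lam, u, v, g, hG, hg0, hsum, hne, hlm, hdeg⟩ := hf
  exact ⟨n, lam, u, v, g, hG, hg0, hsum, hne, fun j => (hlm j).trans hm,
    fun j => (hdeg j).trans hd⟩

theorem HasGroebnerRep.single_mul_mul_single_add {g : MonoidAlgebra K (FreeMonoid X)}
    {u v : FreeMonoid X} (c : K) (hf : HasGroebnerRep G m d f) (hg : g ∈ G) (hg0 : g ≠ 0)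
    (hm : lm (single u (1 : K) * g * single v (1 : K)) ≤ m)
    (hd : u.length + dW g + v.length ≤ d) :
    HasGroebnerRep G m d (single u c * g * single v 1 + f) := by
  obtain ⟨n, lam, us, vs, gs, hG, hg0s, hsum, hne, hlm, hdeg⟩ := hf
  refine ⟨n + 1, Fin.cons c lam, Fin.cons u us, Fin.cons v vs, Fin.cons g gs,
    Fin.cases hg hG, Fin.cases hg0 hg0s, ?_, Fin.cases (by simp) hne, Fin.cases hm hlm,
    Fin.cases hd hdeg⟩
  rw [Fin.sum_univ_succ, hsum]
  simp only [Fin.cons_zero, Fin.cons_succ]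

end HasGroebnerRep

theorem hasGroebnerRep_of_mem (hgr : GradedOrder X) (hmo : MonomialOrder' X)
    (hwf : WellFoundedLT (FreeMonoid X)) {I : TwoSidedIdeal (MonoidAlgebra K (FreeMonoid X))}
    {G : Set (MonoidAlgebra K (FreeMonoid X))} (hGI : G ⊆ (I : Set _))
    (hGB : TwoSidedIdeal.span (LMset (I : Set _)) ≤ TwoSidedIdeal.span (LMset G))
    {f : MonoidAlgebra K (FreeMonoid X)} (hf : f ∈ I) : HasGroebnerRep G (lm f) (dW f) f := by
  induction hm : lm f using hwf.wf.induction generalizing f with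
  | _ _ ih =>
  subst hm
  obtain rfl | hf0 := eq_or_ne f 0
  · exact hasGroebnerRep_zero
  obtain ⟨g, hg, hg0, u, v, c, huv, hlt⟩ := exists_leading_reduction hmo hGB hf hf0
  set r := f - single u c * g * single v 1 with hr
  have hrep : HasGroebnerRep G (lm f) (dW f) r := by
    by_cases hr0 : r = 0
    · exact hr0 ▸ hasGroebnerRep_zero
    have hrf := hlt _ (lm_mem_support hr0)
    have hrI : r ∈ I := I.sub_mem hf (I.mul_mem_right _ _ (I.mul_mem_left _ _ (hGI hg)))
    refine (ih _ hrf hrI rfl).mono hrf.le ?_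
    rw [hgr.dW_eq_length_lm hr0, hgr.dW_eq_length_lm hf0]
    exact hgr.length_le_length hrf.le
  have hterm : lm (single u (1 : K) * g * single v (1 : K)) = lm f := by
    rw [lm_single_mul_mul_single hmo one_ne_zero hg0, huv]
  have hdeg : u.length + dW g + v.length = dW f := by
    rw [hgr.dW_eq_length_lm hg0, hgr.dW_eq_length_lm hf0, huv, FreeMonoid.length_mul,
      FreeMonoid.length_mul]
  simpa only [hr, add_sub_cancel] using
    hrep.single_mul_mul_single_add c hg hg0 hterm.le hdeg.le

/-- If `⟨LM(I)⟩ = ⟨LM(𝒢)⟩` for a graded monomial ordering, then every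
nonzero `f ∈ I` has a Gröbner presentation `f = Σⱼ λⱼ uⱼ gⱼ vⱼ` with `gⱼ ∈ 𝒢`,
`uⱼ LM(gⱼ) vⱼ ≠ 0`, `LM(f) ≽ LM(uⱼ gⱼ vⱼ)` and `d(uⱼ) + d(gⱼ) + d(vⱼ) ≤ d(f)`. -/
theorem stmt19 (hgr : GradedOrder X) (hmo : MonomialOrder' X)
    (hwf : WellFoundedLT (FreeMonoid X))
    (I : TwoSidedIdeal (MonoidAlgebra K (FreeMonoid X)))
    (G : Set (MonoidAlgebra K (FreeMonoid X))) (hGI : G ⊆ (I : Set _))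
    (hGB : TwoSidedIdeal.span (LMset (I : Set (MonoidAlgebra K (FreeMonoid X)))) =
      TwoSidedIdeal.span (LMset G)) :
    ∀ f ∈ I, f ≠ 0 →
      ∃ (n : ℕ) (lam : Fin n → K) (u v : Fin n → FreeMonoid X)
        (g : Fin n → MonoidAlgebra K (FreeMonoid X)),
        (∀ j, g j ∈ G) ∧ (∀ j, g j ≠ 0) ∧
        f = ∑ j, MonoidAlgebra.single (u j) (lam j) * g j * MonoidAlgebra.single (v j) 1 ∧
        (∀ j, MonoidAlgebra.single (u j) (1 : K) * MonoidAlgebra.single (lm (g j)) (1 : K) *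
            MonoidAlgebra.single (v j) (1 : K) ≠ 0) ∧
        (∀ j, lm (MonoidAlgebra.single (u j) (1 : K) * g j *
            MonoidAlgebra.single (v j) (1 : K)) ≤ lm f) ∧
        (∀ j, (u j).length + dW (g j) + (v j).length ≤ dW f) :=
  fun _ hf _ => hasGroebnerRep_of_mem hgr hmo hwf hGI hGB.le hf
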